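/- arXiv:2404.13536 — 4 statements merged into one kernel-verified Lean document; each statement's English description precedes it below -/
import Mathlib

section
/- Let ψ, a ∈ ℂ^N, β ∈ ℂ, G ∈ ℂ^{N×M}, and R ∈ ℂ^{M×M}. Set Ψ = diag(ψ), A = diag(a), E = β·a a^T, Θ = ψψ^H, and R_1 = A G R G^H A^H. Then tr( Ψ E Ψ G R G^H Ψ^H E^H Ψ^H ) = |β|² · tr( A^H A Θ ) · tr( R_1 Θ^T ). -/
open Matrix Complex

lemma aux_dvd {n : ℕ} (ψ a : Fin n → ℂ) :
    Matrix.diagonal ψ * Matrix.vecMulVec a a * Matrix.diagonal ψ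
      = Matrix.vecMulVec (ψ * a) (ψ * a) := by
  ext i j
  simp [Matrix.mul_apply, Matrix.diagonal, Matrix.vecMulVec_apply, Finset.sum_mul,
    Finset.mul_sum, Pi.mul_apply]
  ring

lemma aux_key {n : ℕ} (u : Fin n → ℂ) (M0 : Matrix (Fin n) (Fin n) ℂ) :
    Matrix.vecMulVec u u * M0 * Matrix.vecMulVec (star u) (star u)
      = (∑ j, ∑ k, u j * M0 j k * star (u k)) • Matrix.vecMulVec u (star u) := by
  ext i l
  simp only [Matrix.mul_apply, Matrix.vecMulVec_apply, Matrix.smul_apply, Pi.star_apply,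
    smul_eq_mul, Finset.sum_mul, Finset.mul_sum]
  rw [Finset.sum_comm]
  refine Finset.sum_congr rfl fun j _ => Finset.sum_congr rfl fun k _ => ?_
  ring

lemma aux_trace_vmv {n : ℕ} (u v : Fin n → ℂ) :
    Matrix.trace (Matrix.vecMulVec u v) = ∑ i, u i * v i := by
  simp [Matrix.trace, Matrix.vecMulVec_apply, Matrix.diag]

/-- with `Ψ = diag(ψ)`, `A = diag(a)`, `E = β·a aᵀ`, `Θ = ψψᴴ`, and
`R₁ = A G R Gᴴ Aᴴ`, one has
`tr(Ψ E Ψ G R Gᴴ Ψᴴ Eᴴ Ψᴴ) = |β|²·tr(Aᴴ A Θ)·tr(R₁ Θᵀ)`. -/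
theorem stmt11 (N M : ℕ) (ψ a : Fin N → ℂ) (β : ℂ)
    (G : Matrix (Fin N) (Fin M) ℂ) (R : Matrix (Fin M) (Fin M) ℂ)
    (Ψ A E Θ R1 : Matrix (Fin N) (Fin N) ℂ)
    (hΨ : Ψ = Matrix.diagonal ψ) (hA : A = Matrix.diagonal a)
    (hE : E = β • Matrix.vecMulVec a a)
    (hΘ : Θ = Matrix.vecMulVec ψ (star ψ))
    (hR1 : R1 = A * G * R * Gᴴ * Aᴴ) :
    Matrix.trace (Ψ * E * Ψ * G * R * Gᴴ * Ψᴴ * Eᴴ * Ψᴴ)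
      = (Complex.normSq β : ℂ) * Matrix.trace (Aᴴ * A * Θ) * Matrix.trace (R1 * Θᵀ) := by
  subst hΨ hA hE hΘ hR1
  have hΨH : (Matrix.diagonal ψ)ᴴ = Matrix.diagonal (star ψ) := Matrix.diagonal_conjTranspose ψ
  have hEH : (β • Matrix.vecMulVec a a)ᴴ
      = (star β) • Matrix.vecMulVec (star a) (star a) := by
    ext i j
    simp [Matrix.conjTranspose_apply, Matrix.vecMulVec_apply, mul_comm]
  set u : Fin N → ℂ := ψ * a with hu
  have hmat : Matrix.diagonal ψ * (β • Matrix.vecMulVec a a) * Matrix.diagonal ψ * G * R * Gᴴ *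
        (Matrix.diagonal ψ)ᴴ * (β • Matrix.vecMulVec a a)ᴴ * (Matrix.diagonal ψ)ᴴ
      = (β * star β) • (Matrix.vecMulVec u u * (G * R * Gᴴ) *
          Matrix.vecMulVec (star u) (star u)) := by
    rw [hΨH, hEH]
    simp only [Matrix.mul_smul, Matrix.smul_mul, smul_smul]
    rw [mul_comm (star β) β]
    congr 1
    have h1 : Matrix.diagonal ψ * Matrix.vecMulVec a a * Matrix.diagonal ψ
        = Matrix.vecMulVec u u := aux_dvd ψ a
    have h2 : ∀ B : Matrix (Fin N) (Fin N) ℂ,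
        B * Matrix.diagonal (star ψ) * Matrix.vecMulVec (star a) (star a) *
          Matrix.diagonal (star ψ) = B * Matrix.vecMulVec (star u) (star u) := by
      intro B
      rw [Matrix.mul_assoc B, Matrix.mul_assoc B, aux_dvd]
      congr 1 ; ext i; simp [hu, mul_comm]
    calc Matrix.diagonal ψ * Matrix.vecMulVec a a * Matrix.diagonal ψ * G * R * Gᴴ *
          Matrix.diagonal (star ψ) * Matrix.vecMulVec (star a) (star a) *
          Matrix.diagonal (star ψ)
        = Matrix.vecMulVec u u * G * R * Gᴴ * Matrix.diagonal (star ψ) *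
          Matrix.vecMulVec (star a) (star a) * Matrix.diagonal (star ψ) := by rw [h1]
      _ = Matrix.vecMulVec u u * G * R * Gᴴ * Matrix.vecMulVec (star u) (star u) := h2 _
      _ = Matrix.vecMulVec u u * (G * R * Gᴴ) * Matrix.vecMulVec (star u) (star u) := by
          rw [Matrix.mul_assoc (Matrix.vecMulVec u u), Matrix.mul_assoc (Matrix.vecMulVec u u)]
  rw [hmat, aux_key, Matrix.trace_smul, Matrix.trace_smul, aux_trace_vmv, smul_smul]
  have hTr1 : Matrix.trace ((Matrix.diagonal a)ᴴ * Matrix.diagonal a *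
      Matrix.vecMulVec ψ (star ψ)) = ∑ i, u i * star (u i) := by
    rw [Matrix.diagonal_conjTranspose, Matrix.diagonal_mul_diagonal]
    simp [Matrix.trace, Matrix.diag, Matrix.mul_apply, Matrix.diagonal, Matrix.vecMulVec_apply, hu]
    exact Finset.sum_congr rfl fun i _ => by ring
  have hX : ∀ i j, (Matrix.diagonal a * G * R * Gᴴ * (Matrix.diagonal a)ᴴ) i j
      = a i * (G * R * Gᴴ) i j * star (a j) := by
    intro i j
    rw [Matrix.diagonal_conjTranspose, Matrix.mul_diagonal,
      Matrix.mul_assoc (Matrix.diagonal a) G R, Matrix.mul_assoc (Matrix.diagonal a),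
      Matrix.diagonal_mul]
    simp
  have hTr2 : Matrix.trace (Matrix.diagonal a * G * R * Gᴴ * (Matrix.diagonal a)ᴴ *
      (Matrix.vecMulVec ψ (star ψ))ᵀ)
      = ∑ j, ∑ k, u j * (G * R * Gᴴ) j k * star (u k) := by
    have ht : (Matrix.vecMulVec ψ (star ψ))ᵀ = Matrix.vecMulVec (star ψ) ψ := by
      ext i j; simp [Matrix.vecMulVec_apply, mul_comm]
    rw [ht]
    simp only [Matrix.trace, Matrix.diag_apply, Matrix.mul_apply, Matrix.vecMulVec_apply, hX]
    refine Finset.sum_congr rfl fun i _ => Finset.sum_congr rfl fun j _ => ?_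
    simp only [hu, Pi.mul_apply, Pi.star_apply, star_mul']
    ring
  rw [hTr1, hTr2]
  simp only [smul_eq_mul, Pi.star_apply, Complex.star_def, Complex.normSq_eq_conj_mul_self]
  ring
end

section
/- (Trace expansion of the angle–angle FIM term in Θ, eqs. (41)–(43).) Let ψ, a ∈ ℂ^N, G ∈ ℂ^{N×M}, R_s, W ∈ ℂ^{M×M}, and let Z_1, Z_2 ∈ ℂ^{N×N} be diagonal. Set A = diag(a), Θ = ψψ^H, C_i = G^T A (Z_i ψψ^T + ψψ^T Z_i) A G for i = 1, 2, R_1 = A G R_s G^H A^H, and R_2 = A^H G^* W G^T A (where G^* is the entrywise complex conjugate of G). Then tr( C_1^H W C_2 R_s ) = tr(R_1 Θ^T)·tr(Z_1^H R_2 Z_2 Θ) + tr(Z_2 R_1 Θ^T)·tr(Z_1^H R_2 Θ) + tr(R_1 Z_1^H Θ^T)·tr(R_2 Z_2 Θ) + tr(Z_2 R_1 Z_1^H Θ^T)·tr(R_2 Θ). -/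
/-!
Cycling the trace turns `tr(C₁ᴴ W C₂ R_s)` into `tr(S₁ᴴ R₂ S₂ R₁)` with `S_i = Z_i ψψᵀ + ψψᵀ Z_i`.
Since `S₁ᴴ = ψ̄ψ̄ᵀ Z₁ᴴ + Z₁ᴴ ψ̄ψ̄ᵀ`, expanding gives four traces of the form `tr(ψ̄ψ̄ᵀ X ψψᵀ Y)`, and each
such trace of a product with two rank-one factors splits as `tr(X ψψ̄ᵀ) · tr(Y ψ̄ψᵀ) = tr(XΘ) · tr(YΘᵀ)`.
-/

open Matrix Complex

namespace Matrix

variable {l m n k R : Type*} [Fintype l] [Fintype m] [Fintype n] [Fintype k]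

theorem trace_vecMulVec_mul_vecMulVec_mul [CommSemiring R] (u : l → R) (v : m → R)
    (X : Matrix m n R) (p : n → R) (q : k → R) (Y : Matrix k l R) :
    trace (vecMulVec u v * X * vecMulVec p q * Y) =
      trace (Y * vecMulVec u q) * trace (X * vecMulVec p v) := by
  rw [vecMulVec_mul, vecMulVec_mul_vecMulVec, vecMulVec_mul, trace_vecMulVec, mul_vecMulVec,
    trace_vecMulVec, mul_vecMulVec, trace_vecMulVec, smul_vecMul, dotProduct_smul,
    ← dotProduct_mulVec, dotProduct_comm (Y *ᵥ u), dotProduct_comm (X *ᵥ p), smul_eq_mul,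
    dotProduct_comm u, ← dotProduct_mulVec, mul_comm]

theorem trace_conjTranspose_mul_mul_mul [CommSemiring R] [StarRing R]
    (K : Matrix m n R) (S T : Matrix n n R) (B : Matrix n m R) (W Q : Matrix m m R) :
    trace ((K * S * B)ᴴ * W * (K * T * B) * Q) =
      trace (Sᴴ * (Kᴴ * W * K) * T * (B * Q * Bᴴ)) := by
  simp only [conjTranspose_mul, Matrix.mul_assoc]
  rw [trace_mul_comm]
  simp only [Matrix.mul_assoc]

theorem trace_add_mul_mul_add_mul [CommSemiring R] (Q D₁ X D₂ P Y : Matrix n n R) :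
    trace ((Q * D₁ + D₁ * Q) * X * (D₂ * P + P * D₂) * Y) =
      trace (Q * (D₁ * X * D₂) * P * Y) + trace (Q * (D₁ * X) * P * (D₂ * Y))
      + trace (Q * (X * D₂) * P * (Y * D₁)) + trace (Q * X * P * (D₂ * Y * D₁)) := by
  simp only [add_mul, mul_add, trace_add, Matrix.mul_assoc]
  rw [trace_mul_comm D₁, trace_mul_comm D₁]
  simp only [Matrix.mul_assoc]
  abel

end Matrix

theorem stmt16_general (N M : ℕ) (ψ : Fin N → ℂ)
    (G : Matrix (Fin N) (Fin M) ℂ) (Rs W : Matrix (Fin M) (Fin M) ℂ)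
    (Z1 Z2 : Matrix (Fin N) (Fin N) ℂ)
    (A Θ : Matrix (Fin N) (Fin N) ℂ)
    (hΘ : Θ = Matrix.vecMulVec ψ (star ψ))
    (C1 C2 : Matrix (Fin M) (Fin M) ℂ)
    (hC1 : C1 = Gᵀ * A * (Z1 * Matrix.vecMulVec ψ ψ + Matrix.vecMulVec ψ ψ * Z1) * A * G)
    (hC2 : C2 = Gᵀ * A * (Z2 * Matrix.vecMulVec ψ ψ + Matrix.vecMulVec ψ ψ * Z2) * A * G)
    (R1 R2 : Matrix (Fin N) (Fin N) ℂ)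
    (hR1 : R1 = A * G * Rs * Gᴴ * Aᴴ)
    (hR2 : R2 = Aᴴ * G.map (starRingEnd ℂ) * W * Gᵀ * A) :
    Matrix.trace (C1ᴴ * W * C2 * Rs)
      = Matrix.trace (R1 * Θᵀ) * Matrix.trace (Z1ᴴ * R2 * Z2 * Θ)
      + Matrix.trace (Z2 * R1 * Θᵀ) * Matrix.trace (Z1ᴴ * R2 * Θ)
      + Matrix.trace (R1 * Z1ᴴ * Θᵀ) * Matrix.trace (R2 * Z2 * Θ)
      + Matrix.trace (Z2 * R1 * Z1ᴴ * Θᵀ) * Matrix.trace (R2 * Θ) := by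
  have hR1' : R1 = A * G * Rs * (A * G)ᴴ := by
    rw [hR1, conjTranspose_mul, ← Matrix.mul_assoc]
  have hR2' : R2 = (Gᵀ * A)ᴴ * W * (Gᵀ * A) := by
    rw [hR2, conjTranspose_mul]
    simp only [Matrix.mul_assoc]
    rfl
  rw [hC1, hC2, Matrix.mul_assoc _ A G, Matrix.mul_assoc _ A G, trace_conjTranspose_mul_mul_mul,
    ← hR1', ← hR2', conjTranspose_add, conjTranspose_mul, conjTranspose_mul,
    conjTranspose_vecMulVec, trace_add_mul_mul_add_mul, hΘ, transpose_vecMulVec]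
  simp only [trace_vecMulVec_mul_vecMulVec_mul]

/-- trace expansion of the angle–angle FIM term in `Θ`, eqs. (41)–(43):
with `A = diag(a)`, `Θ = ψψᴴ`, `C_i = Gᵀ A (Z_i ψψᵀ + ψψᵀ Z_i) A G`,
`R₁ = A G R_s Gᴴ Aᴴ`, and `R₂ = Aᴴ G* W Gᵀ A`,
`tr(C₁ᴴ W C₂ R_s) = tr(R₁Θᵀ)·tr(Z₁ᴴR₂Z₂Θ) + tr(Z₂R₁Θᵀ)·tr(Z₁ᴴR₂Θ)
 + tr(R₁Z₁ᴴΘᵀ)·tr(R₂Z₂Θ) + tr(Z₂R₁Z₁ᴴΘᵀ)·tr(R₂Θ)`. -/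
theorem stmt16 (N M : ℕ) (ψ a : Fin N → ℂ)
    (G : Matrix (Fin N) (Fin M) ℂ) (Rs W : Matrix (Fin M) (Fin M) ℂ)
    (z1 z2 : Fin N → ℂ) (Z1 Z2 : Matrix (Fin N) (Fin N) ℂ)
    (hZ1 : Z1 = Matrix.diagonal z1) (hZ2 : Z2 = Matrix.diagonal z2)
    (A Θ : Matrix (Fin N) (Fin N) ℂ)
    (hA : A = Matrix.diagonal a) (hΘ : Θ = Matrix.vecMulVec ψ (star ψ))
    (C1 C2 : Matrix (Fin M) (Fin M) ℂ)
    (hC1 : C1 = Gᵀ * A * (Z1 * Matrix.vecMulVec ψ ψ + Matrix.vecMulVec ψ ψ * Z1) * A * G)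
    (hC2 : C2 = Gᵀ * A * (Z2 * Matrix.vecMulVec ψ ψ + Matrix.vecMulVec ψ ψ * Z2) * A * G)
    (R1 R2 : Matrix (Fin N) (Fin N) ℂ)
    (hR1 : R1 = A * G * Rs * Gᴴ * Aᴴ)
    (hR2 : R2 = Aᴴ * G.map (starRingEnd ℂ) * W * Gᵀ * A) :
    Matrix.trace (C1ᴴ * W * C2 * Rs)
      = Matrix.trace (R1 * Θᵀ) * Matrix.trace (Z1ᴴ * R2 * Z2 * Θ)
      + Matrix.trace (Z2 * R1 * Θᵀ) * Matrix.trace (Z1ᴴ * R2 * Θ)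
      + Matrix.trace (R1 * Z1ᴴ * Θᵀ) * Matrix.trace (R2 * Z2 * Θ)
      + Matrix.trace (Z2 * R1 * Z1ᴴ * Θᵀ) * Matrix.trace (R2 * Θ) :=
  stmt16_general N M ψ G Rs W Z1 Z2 A Θ hΘ C1 C2 hC1 hC2 R1 R2 hR1 hR2
end

section
/- (Trace expansion of the angle–coefficient FIM term in Θ, eqs. (44)–(45).) Let ψ, a ∈ ℂ^N, G ∈ ℂ^{N×M}, R_s, W ∈ ℂ^{M×M}, and let Z ∈ ℂ^{N×N} be diagonal. Set A = diag(a), Θ = ψψ^H, C = G^T A (Z ψψ^T + ψψ^T Z) A G, H = G^T A ψψ^T A G, R_1 = A G R_s G^H A^H, and R_2 = A^H G^* W G^T A (where G^* is the entrywise complex conjugate of G). Then tr( C^H W H R_s ) = tr(R_1 Θ^T)·tr(Z^H R_2 Θ) + tr(R_1 Z^H Θ^T)·tr(R_2 Θ). -/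
/-!
`H` and both summands of `C` have rank one: with `p = GᵀAψ`, `q = ψᵀAG`, `p_Z = GᵀAZψ` and
`q_Z = ψᵀZAG` we get `H = p qᵀ` and `C = p_Z qᵀ + p q_Zᵀ`. The trace of
`(u vᵀ)ᴴ W (p qᵀ) R` splits as `(uᴴ W p) · (qᵀ R v̄)`, and each of the four traces on the right
hand side is one of the bilinear forms `qᵀ R_s q̄`, `qᵀ R_s q̄_Z`, `p_Zᴴ W p`, `pᴴ W p`.
-/

open Matrix

section

variable {α : Type*} {l m n k : Type*} [Fintype m] [Fintype n]

theorem mul_vecMulVec_mul [NonUnitalSemiring α] (X : Matrix l m α) (u : m → α) (v : n → α)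
    (Y : Matrix n k α) : X * vecMulVec u v * Y = vecMulVec (X *ᵥ u) (v ᵥ* Y) := by
  rw [mul_vecMulVec, vecMulVec_mul]

variable [Fintype l] [Fintype k] [CommSemiring α] [StarRing α]

theorem trace_conjTranspose_vecMulVec_mul_vecMulVec_mul
    (u : m → α) (v : n → α) (W : Matrix m k α) (p : k → α) (q : l → α) (R : Matrix l n α) :
    trace ((vecMulVec u v)ᴴ * W * vecMulVec p q * R)
      = (star u ⬝ᵥ W *ᵥ p) * (q ⬝ᵥ R *ᵥ star v) := by
  rw [conjTranspose_vecMulVec, vecMulVec_mul, vecMulVec_mul_vecMulVec, vecMulVec_mul,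
    trace_vecMulVec, smul_vecMul, dotProduct_smul, smul_eq_mul, dotProduct_comm (star v),
    ← dotProduct_mulVec, ← dotProduct_mulVec]

theorem trace_mul_conjTranspose_mul_transpose_vecMulVec_star (X : Matrix n m α)
    (R : Matrix m k α) (Y : Matrix l k α) (u : n → α) (v : l → α) :
    trace (X * R * Yᴴ * (vecMulVec u (star v))ᵀ) = (u ᵥ* X) ⬝ᵥ R *ᵥ star (v ᵥ* Y) := by
  rw [transpose_vecMulVec, mul_vecMulVec, trace_vecMulVec, dotProduct_comm, star_vecMul]
  simp only [dotProduct_mulVec, vecMul_vecMul]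

theorem trace_conjTranspose_mul_mul_vecMulVec_star (Y : Matrix k n α) (W : Matrix k l α)
    (X : Matrix l m α) (u : m → α) (v : n → α) :
    trace (Yᴴ * W * X * vecMulVec u (star v)) = star (Y *ᵥ v) ⬝ᵥ W *ᵥ (X *ᵥ u) := by
  rw [mul_vecMulVec, trace_vecMulVec, dotProduct_comm, star_mulVec]
  simp only [dotProduct_mulVec, vecMul_vecMul]

end

theorem stmt17_general (N M : ℕ) (ψ : Fin N → ℂ)
    (G : Matrix (Fin N) (Fin M) ℂ) (Rs W : Matrix (Fin M) (Fin M) ℂ)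
    (Z : Matrix (Fin N) (Fin N) ℂ)
    (A Θ : Matrix (Fin N) (Fin N) ℂ)
    (hΘ : Θ = Matrix.vecMulVec ψ (star ψ))
    (C H : Matrix (Fin M) (Fin M) ℂ)
    (hC : C = Gᵀ * A * (Z * Matrix.vecMulVec ψ ψ + Matrix.vecMulVec ψ ψ * Z) * A * G)
    (hH : H = Gᵀ * A * Matrix.vecMulVec ψ ψ * A * G)
    (R1 R2 : Matrix (Fin N) (Fin N) ℂ)
    (hR1 : R1 = A * G * Rs * Gᴴ * Aᴴ)
    (hR2 : R2 = Aᴴ * G.map (starRingEnd ℂ) * W * Gᵀ * A) :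
    Matrix.trace (Cᴴ * W * H * Rs)
      = Matrix.trace (R1 * Θᵀ) * Matrix.trace (Zᴴ * R2 * Θ)
      + Matrix.trace (R1 * Zᴴ * Θᵀ) * Matrix.trace (R2 * Θ) := by
  have hH_rankOne : H = vecMulVec ((Gᵀ * A) *ᵥ ψ) (ψ ᵥ* (A * G)) := by
    rw [hH, Matrix.mul_assoc _ A G, mul_vecMulVec_mul]
  have hC_rankTwo : C = vecMulVec ((Gᵀ * A * Z) *ᵥ ψ) (ψ ᵥ* (A * G))
      + vecMulVec ((Gᵀ * A) *ᵥ ψ) (ψ ᵥ* (Z * A * G)) := by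
    rw [hC, ← mul_vecMulVec_mul, ← mul_vecMulVec_mul]
    simp only [Matrix.mul_add, Matrix.add_mul, Matrix.mul_assoc]
  have hR1_sandwich : R1 = (A * G) * Rs * (A * G)ᴴ := by
    simp only [hR1, conjTranspose_mul, Matrix.mul_assoc]
  have hR1Z_sandwich : R1 * Zᴴ = (A * G) * Rs * (Z * A * G)ᴴ := by
    simp only [hR1, conjTranspose_mul, Matrix.mul_assoc]
  have hR2_sandwich : R2 = (Gᵀ * A)ᴴ * W * (Gᵀ * A) := by
    simp only [hR2, conjTranspose_mul, transpose_conjTranspose, Matrix.mul_assoc]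
    rfl
  have hZR2_sandwich : Zᴴ * R2 = (Gᵀ * A * Z)ᴴ * W * (Gᵀ * A) := by
    simp only [hR2_sandwich, conjTranspose_mul, Matrix.mul_assoc]
  rw [hC_rankTwo, hH_rankOne, conjTranspose_add, Matrix.add_mul, Matrix.add_mul, Matrix.add_mul,
    trace_add, trace_conjTranspose_vecMulVec_mul_vecMulVec_mul,
    trace_conjTranspose_vecMulVec_mul_vecMulVec_mul, hR1Z_sandwich, hR1_sandwich, hZR2_sandwich,
    hR2_sandwich, hΘ, trace_mul_conjTranspose_mul_transpose_vecMulVec_star,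
    trace_mul_conjTranspose_mul_transpose_vecMulVec_star,
    trace_conjTranspose_mul_mul_vecMulVec_star, trace_conjTranspose_mul_mul_vecMulVec_star]
  ring

/-- trace expansion of the angle–coefficient FIM term in `Θ`, eqs. (44)–(45):
with `A = diag(a)`, `Θ = ψψᴴ`, `C = Gᵀ A (Z ψψᵀ + ψψᵀ Z) A G`, `H = Gᵀ A ψψᵀ A G`,
`R₁ = A G R_s Gᴴ Aᴴ`, and `R₂ = Aᴴ G* W Gᵀ A`,
`tr(Cᴴ W H R_s) = tr(R₁Θᵀ)·tr(ZᴴR₂Θ) + tr(R₁ZᴴΘᵀ)·tr(R₂Θ)`. -/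
theorem stmt17 (N M : ℕ) (ψ a : Fin N → ℂ)
    (G : Matrix (Fin N) (Fin M) ℂ) (Rs W : Matrix (Fin M) (Fin M) ℂ)
    (z : Fin N → ℂ) (Z : Matrix (Fin N) (Fin N) ℂ) (hZ : Z = Matrix.diagonal z)
    (A Θ : Matrix (Fin N) (Fin N) ℂ)
    (hA : A = Matrix.diagonal a) (hΘ : Θ = Matrix.vecMulVec ψ (star ψ))
    (C H : Matrix (Fin M) (Fin M) ℂ)
    (hC : C = Gᵀ * A * (Z * Matrix.vecMulVec ψ ψ + Matrix.vecMulVec ψ ψ * Z) * A * G)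
    (hH : H = Gᵀ * A * Matrix.vecMulVec ψ ψ * A * G)
    (R1 R2 : Matrix (Fin N) (Fin N) ℂ)
    (hR1 : R1 = A * G * Rs * Gᴴ * Aᴴ)
    (hR2 : R2 = Aᴴ * G.map (starRingEnd ℂ) * W * Gᵀ * A) :
    Matrix.trace (Cᴴ * W * H * Rs)
      = Matrix.trace (R1 * Θᵀ) * Matrix.trace (Zᴴ * R2 * Θ)
      + Matrix.trace (R1 * Zᴴ * Θᵀ) * Matrix.trace (R2 * Θ) :=
  stmt17_general N M ψ G Rs W Z A Θ hΘ C H hC hH R1 R2 hR1 hR2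
end

section
/- (Trace expansion of the coefficient–coefficient FIM term in Θ, eq. (46).) Let ψ, a ∈ ℂ^N, G ∈ ℂ^{N×M}, and R_s, W ∈ ℂ^{M×M}. Set A = diag(a), Θ = ψψ^H, H = G^T A ψψ^T A G, R_1 = A G R_s G^H A^H, and R_2 = A^H G^* W G^T A (where G^* is the entrywise complex conjugate of G). Then tr( H^H W H R_s ) = tr(R_1 Θ^T) · tr(R_2 Θ). -/
/-!
With `x = Gᵀ A ψ` the matrix `H` is the rank-one matrix `x xᵀ`, so `tr(Hᴴ W H R_s)` factors as
the product of the two scalars `x̄ᵀ W x` and `xᵀ R_s x̄`. Since `A` is diagonal, hence symmetric,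
`ψᵀ A G = xᵀ`, and the two traces on the right-hand side are exactly these scalars.
-/

open Matrix Complex

namespace Matrix

variable {R : Type*} [CommRing R] {m n : Type*} [Fintype m] [Fintype n]

theorem trace_mul_vecMulVec (B : Matrix n n R) (u v : n → R) :
    trace (B * vecMulVec u v) = v ⬝ᵥ (B *ᵥ u) := by
  rw [mul_vecMulVec, trace_vecMulVec, dotProduct_comm]

variable [StarRing R]

theorem trace_conjTranspose_mul_mul_vecMulVec_star (C : Matrix m n R) (W : Matrix m m R)
    (u : n → R) :
    trace (Cᴴ * W * C * vecMulVec u (star u)) = star (C *ᵥ u) ⬝ᵥ (W *ᵥ (C *ᵥ u)) := by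
  rw [trace_mul_vecMulVec, ← mulVec_mulVec, ← mulVec_mulVec, dotProduct_mulVec, ← star_mulVec]

theorem trace_conjTranspose_vecMulVec_self_mul (x : m → R) (W Rs : Matrix m m R) :
    trace ((vecMulVec x x)ᴴ * W * vecMulVec x x * Rs)
      = (star x ⬝ᵥ (W *ᵥ x)) * (x ⬝ᵥ (Rs *ᵥ star x)) := by
  rw [conjTranspose_vecMulVec, vecMulVec_mul, vecMulVec_mul_vecMulVec, vecMulVec_mul,
    trace_vecMulVec, smul_vecMul, dotProduct_smul, smul_eq_mul,
    dotProduct_comm (star x), ← dotProduct_mulVec, ← dotProduct_mulVec]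

theorem IsSymm.trace_conjTranspose_mul_mul_eq_trace_mul_trace {A : Matrix n n R} (hA : A.IsSymm)
    (ψ : n → R) (G : Matrix n m R) (Rs W : Matrix m m R) :
    trace ((Gᵀ * A * vecMulVec ψ ψ * A * G)ᴴ * W * (Gᵀ * A * vecMulVec ψ ψ * A * G) * Rs)
      = trace (A * G * Rs * Gᴴ * Aᴴ * (vecMulVec ψ (star ψ))ᵀ)
        * trace (Aᴴ * G.map star * W * Gᵀ * A * vecMulVec ψ (star ψ)) := by
  set x := (Gᵀ * A) *ᵥ ψ
  have hx : ψ ᵥ* (A * G) = x := by rw [← mulVec_transpose, transpose_mul, hA.eq]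
  have hH : Gᵀ * A * vecMulVec ψ ψ * A * G = vecMulVec x x := by
    rw [Matrix.mul_assoc _ A G, mul_vecMulVec, vecMulVec_mul, hx]
  have hR1 : trace (A * G * Rs * Gᴴ * Aᴴ * (vecMulVec ψ (star ψ))ᵀ) = x ⬝ᵥ (Rs *ᵥ star x) := by
    have := trace_conjTranspose_mul_mul_vecMulVec_star (A * G)ᴴ Rs (star ψ)
    simp only [conjTranspose_conjTranspose, mulVec_conjTranspose, star_star, hx] at this
    rwa [conjTranspose_mul, ← Matrix.mul_assoc, ← transpose_vecMulVec] at this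
  have hR2 : trace (Aᴴ * G.map star * W * Gᵀ * A * vecMulVec ψ (star ψ))
      = star x ⬝ᵥ (W *ᵥ x) := by
    have hfactor : Aᴴ * G.map star * W * Gᵀ * A = (Gᵀ * A)ᴴ * W * (Gᵀ * A) := by
      rw [conjTranspose_mul, transpose_conjTranspose, ← Matrix.mul_assoc, Matrix.mul_assoc _ Gᵀ A]
    rw [hfactor]
    exact trace_conjTranspose_mul_mul_vecMulVec_star _ _ _
  rw [hH, trace_conjTranspose_vecMulVec_self_mul, hR1, hR2, mul_comm]

end Matrix

/-- trace expansion of the coefficient–coefficient FIM term in `Θ`, eq. (46):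
with `A = diag(a)`, `Θ = ψψᴴ`, `H = Gᵀ A ψψᵀ A G`, `R₁ = A G R_s Gᴴ Aᴴ`, and
`R₂ = Aᴴ G* W Gᵀ A`, `tr(Hᴴ W H R_s) = tr(R₁Θᵀ)·tr(R₂Θ)`. -/
theorem stmt18 (N M : ℕ) (ψ a : Fin N → ℂ)
    (G : Matrix (Fin N) (Fin M) ℂ) (Rs W : Matrix (Fin M) (Fin M) ℂ)
    (A Θ : Matrix (Fin N) (Fin N) ℂ)
    (hA : A = Matrix.diagonal a) (hΘ : Θ = Matrix.vecMulVec ψ (star ψ))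
    (H : Matrix (Fin M) (Fin M) ℂ)
    (hH : H = Gᵀ * A * Matrix.vecMulVec ψ ψ * A * G)
    (R1 R2 : Matrix (Fin N) (Fin N) ℂ)
    (hR1 : R1 = A * G * Rs * Gᴴ * Aᴴ)
    (hR2 : R2 = Aᴴ * G.map (starRingEnd ℂ) * W * Gᵀ * A) :
    Matrix.trace (Hᴴ * W * H * Rs)
      = Matrix.trace (R1 * Θᵀ) * Matrix.trace (R2 * Θ) := by
  subst hA hΘ hH hR1 hR2
  exact (isSymm_diagonal a).trace_conjTranspose_mul_mul_eq_trace_mul_trace ψ G Rs W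
end
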